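/- arXiv:1904.09237 — 5 statements merged into one kernel-verified Lean document; each statement's English description precedes it below -/
import Mathlib

section
/- Let F = [a, b] ⊆ R, let y_1 ∈ F, and define y_{t+1} = Π_F(y_t + δ_t) for t = 1, ..., T, where Π_F is the projection onto [a,b]. Suppose there exists i ∈ [T] such that δ_j ≤ 0 for all j ≤ i and δ_j > 0 for all j > i. Then y_{T+1} ≥ min{b, y_1 + Σ_{j=1}^T δ_j}. -/
/-!
The invariant is `min b (y₁ + S_t) ≤ y_{t+1}`, where `S_t = δ₁ + ⋯ + δ_t`. Clipping from below at `a`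
only increases the iterate, and clipping from above at `b` preserves the invariant through step `t`
as soon as either `δ_t ≥ 0`, or `y₁ + S_{t-1} ≤ b`, in which case the invariant at `t - 1` is a plain
lower bound `y₁ + S_{t-1} ≤ y_t`. The sign pattern gives one of the two at every step: a negative
`δ_t` can only occur while all earlier increments are nonpositive, so that `S_{t-1} ≤ 0`, and `y₁ ≤ b`.
-/

open Finset

section

variable {α : Type*} [AddCommGroup α] [LinearOrder α] [IsOrderedAddMonoid α]

lemma min_add_le_min_add_of_min_le {b c z d : α} (h : min b c ≤ z) (hd : 0 ≤ d ∨ c ≤ b) :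
    min b (c + d) ≤ min b (z + d) := by
  rcases hd with hd | hcb
  · refine le_min (min_le_left _ _) ?_
    calc min b (c + d) ≤ min b c + d := by
          rcases le_total c b with hcb | hbc
          · rw [min_eq_right hcb]; exact min_le_right _ _
          · rw [min_eq_left hbc]; exact (min_le_left b (c + d)).trans (le_add_of_nonneg_right hd)
      _ ≤ z + d := by gcongr
  · have hcz : c ≤ z := by rwa [min_eq_right hcb] at h
    exact min_le_min_left b (by gcongr)

theorem min_add_sum_le_of_min_add_le {b : α} {δ y : ℕ → α} {T : ℕ} (hy1 : y 1 ≤ b)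
    (hstep : ∀ t ∈ Icc 1 T, min b (y t + δ t) ≤ y (t + 1))
    (hsign : ∀ t ∈ Icc 1 T, 0 ≤ δ t ∨ ∑ j ∈ Ico 1 t, δ j ≤ 0) :
    min b (y 1 + ∑ j ∈ Icc 1 T, δ j) ≤ y (T + 1) := by
  suffices h : ∀ t ≤ T, min b (y 1 + ∑ j ∈ Ico 1 (t + 1), δ j) ≤ y (t + 1) by
    simpa [Finset.Ico_add_one_right_eq_Icc] using h T le_rfl
  intro t ht
  induction t with
  | zero => simp
  | succ t ih =>
    have hmem : t + 1 ∈ Icc 1 T := mem_Icc.2 ⟨by omega, ht⟩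
    have hclip : 0 ≤ δ (t + 1) ∨ y 1 + ∑ j ∈ Ico 1 (t + 1), δ j ≤ b :=
      (hsign _ hmem).imp_right fun hS => (add_le_of_nonpos_right hS).trans hy1
    rw [sum_Ico_succ_top (by omega), ← add_assoc]
    exact (min_add_le_min_add_of_min_le (ih (by omega)) hclip).trans (hstep _ hmem)

end

lemma nonneg_or_sum_Ico_nonpos {δ : ℕ → ℝ} {T i : ℕ}
    (hneg : ∀ j ∈ Icc 1 T, j ≤ i → δ j ≤ 0) (hpos : ∀ j ∈ Icc 1 T, i < j → 0 < δ j) :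
    ∀ t ∈ Icc 1 T, 0 ≤ δ t ∨ ∑ j ∈ Ico 1 t, δ j ≤ 0 := by
  intro t ht
  rcases le_or_gt t i with hti | hit
  · refine .inr (sum_nonpos fun j hj => hneg j ?_ ?_)
    · simp only [mem_Ico, mem_Icc] at hj ht ⊢; omega
    · simp only [mem_Ico] at hj; omega
  · exact .inl (hpos t ht hit).le

theorem stmt_2_general (a b : ℝ) (T : ℕ) (δ y : ℕ → ℝ)
    (hy1 : y 1 ∈ Set.Icc a b)
    (hrec : ∀ t ∈ Finset.Icc 1 T, y (t + 1) = max a (min b (y t + δ t)))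
    (i : ℕ)
    (hneg : ∀ j ∈ Finset.Icc 1 T, j ≤ i → δ j ≤ 0)
    (hpos : ∀ j ∈ Finset.Icc 1 T, i < j → 0 < δ j) :
    y (T + 1) ≥ min b (y 1 + ∑ j ∈ Finset.Icc 1 T, δ j) := by
  refine min_add_sum_le_of_min_add_le hy1.2 (fun t ht => ?_) (nonneg_or_sum_Ico_nonpos hneg hpos)
  rw [hrec t ht]
  exact le_max_right _ _

/-- One-dimensional projected iterates with nonpositive-then-positive increments satisfy
`y_{T+1} ≥ min {b, y₁ + ∑ δ_j}`, where the projection onto `[a,b]` is `x ↦ max a (min b x)`. -/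
theorem stmt_2 (a b : ℝ) (hab : a ≤ b) (T : ℕ) (δ y : ℕ → ℝ)
    (hy1 : y 1 ∈ Set.Icc a b)
    (hrec : ∀ t ∈ Finset.Icc 1 T, y (t + 1) = max a (min b (y t + δ t)))
    (i : ℕ) (hi : i ∈ Finset.Icc 1 T)
    (hneg : ∀ j ∈ Finset.Icc 1 T, j ≤ i → δ j ≤ 0)
    (hpos : ∀ j ∈ Finset.Icc 1 T, i < j → 0 < δ j) :
    y (T + 1) ≥ min b (y 1 + ∑ j ∈ Finset.Icc 1 T, δ j) :=
  stmt_2_general a b T δ y hy1 hrec i hneg hpos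
end

section
/- Let 0 ≤ β_1 < 1, 0 < β_2 < 1 with β_1^2 < β_2, and let g_1, ..., g_{t-1} be real numbers. Define m_{t-1} = (1-β_1) Σ_{i=1}^{t-1} β_1^{t-1-i} g_i and v_{t-1} = (1-β_2) Σ_{i=1}^{t-1} β_2^{t-1-i} g_i^2. Then m_{t-1} ≤ (1-β_1) sqrt( β_2 / ((1-β_2)(β_2 - β_1^2)) ) · sqrt(v_{t-1}). -/
open Finset

theorem Finset.sum_pow_le_inv_one_sub_of_injOn {ι : Type*} {s : Finset ι} {e : ι → ℕ}
    (he : Set.InjOn e s) {r : ℝ} (hr₀ : 0 ≤ r) (hr₁ : r < 1) :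
    ∑ i ∈ s, r ^ e i ≤ (1 - r)⁻¹ := by
  calc ∑ i ∈ s, r ^ e i = ∑ k ∈ s.image e, r ^ k := (sum_image he).symm
    _ ≤ ∑' k, r ^ k :=
      (summable_geometric_of_lt_one hr₀ hr₁).sum_le_tsum _ fun k _ ↦ pow_nonneg hr₀ k
    _ = (1 - r)⁻¹ := tsum_geometric_of_lt_one hr₀ hr₁

/-- Cauchy–Schwarz against the weights `β₂ ^ e i`; the other factor is then a sum of distinct
powers of `β₁² / β₂ < 1`. -/
theorem Finset.sq_sum_pow_mul_le {ι : Type*} {s : Finset ι} {e : ι → ℕ} (he : Set.InjOn e s)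
    {β₁ β₂ : ℝ} (hβ₂ : 0 < β₂) (h : β₁ ^ 2 < β₂) (g : ι → ℝ) :
    (∑ i ∈ s, β₁ ^ e i * g i) ^ 2 ≤ β₂ / (β₂ - β₁ ^ 2) * ∑ i ∈ s, β₂ ^ e i * g i ^ 2 := by
  have hratio : β₁ ^ 2 / β₂ < 1 := (div_lt_one hβ₂).2 h
  have hgeom : ∑ i ∈ s, (β₁ ^ 2 / β₂) ^ e i ≤ β₂ / (β₂ - β₁ ^ 2) := by
    refine (sum_pow_le_inv_one_sub_of_injOn he (by positivity) hratio).trans_eq ?_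
    field_simp
  have hCS := sum_sq_le_sum_mul_sum_of_sq_le_mul s (r := fun i ↦ β₁ ^ e i * g i)
    (fun i _ ↦ pow_nonneg (div_nonneg (sq_nonneg β₁) hβ₂.le) (e i))
    (fun i _ ↦ mul_nonneg (pow_nonneg hβ₂.le (e i)) (sq_nonneg (g i)))
    (fun i _ ↦ le_of_eq <| by rw [div_pow, ← pow_mul, pow_mul']; field_simp)
  exact hCS.trans <| mul_le_mul_of_nonneg_right hgeom <|
    sum_nonneg fun i _ ↦ mul_nonneg (pow_nonneg hβ₂.le (e i)) (sq_nonneg (g i))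

theorem stmt_4_general (β₁ β₂ : ℝ) (hβ₁' : β₁ < 1) (hβ₂ : 0 < β₂) (hβ₂' : β₂ < 1)
    (h : β₁ ^ 2 < β₂) (t : ℕ) (g : ℕ → ℝ) :
    (1 - β₁) * ∑ i ∈ Finset.Icc 1 (t - 1), β₁ ^ (t - 1 - i) * g i ≤
      (1 - β₁) * Real.sqrt (β₂ / ((1 - β₂) * (β₂ - β₁ ^ 2))) *
        Real.sqrt ((1 - β₂) * ∑ i ∈ Finset.Icc 1 (t - 1), β₂ ^ (t - 1 - i) * g i ^ 2) := by
  have hinj : Set.InjOn (fun i ↦ t - 1 - i) (Icc 1 (t - 1) : Set ℕ) := by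
    intro i hi j hj hij
    simp only [coe_Icc, Set.mem_Icc] at hi hj hij
    omega
  have hsq := sq_sum_pow_mul_le hinj hβ₂ h g
  have hconst : Real.sqrt (β₂ / ((1 - β₂) * (β₂ - β₁ ^ 2))) *
      Real.sqrt ((1 - β₂) * ∑ i ∈ Icc 1 (t - 1), β₂ ^ (t - 1 - i) * g i ^ 2) =
      Real.sqrt (β₂ / (β₂ - β₁ ^ 2) * ∑ i ∈ Icc 1 (t - 1), β₂ ^ (t - 1 - i) * g i ^ 2) := by
    have : 0 < β₂ - β₁ ^ 2 := by linarith
    rw [← Real.sqrt_mul (by bound)]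
    congr 1
    field_simp [show 1 - β₂ ≠ 0 by linarith]
  rw [mul_assoc, hconst]
  exact mul_le_mul_of_nonneg_left ((le_abs_self _).trans (Real.abs_le_sqrt hsq)) (by linarith)

/-- Cauchy–Schwarz bound on the momentum term in terms of the second-moment term. -/
theorem stmt_4 (β₁ β₂ : ℝ) (hβ₁ : 0 ≤ β₁) (hβ₁' : β₁ < 1) (hβ₂ : 0 < β₂) (hβ₂' : β₂ < 1)
    (h : β₁ ^ 2 < β₂) (t : ℕ) (g : ℕ → ℝ) :
    (1 - β₁) * ∑ i ∈ Finset.Icc 1 (t - 1), β₁ ^ (t - 1 - i) * g i ≤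
      (1 - β₁) * Real.sqrt (β₂ / ((1 - β₂) * (β₂ - β₁ ^ 2))) *
        Real.sqrt ((1 - β₂) * ∑ i ∈ Finset.Icc 1 (t - 1), β₂ ^ (t - 1 - i) * g i ^ 2) :=
  stmt_4_general β₁ β₂ hβ₁' hβ₂ hβ₂' h t g
end

section
/- In the setting of the Adam counterexample with β_1 = 0, β_2 = 1/(1+C^2), α_t = α/√t with α < sqrt(1-β_2), C ≥ 2, losses f_t(x) = Cx if t mod 3 = 1 and -x otherwise on [-1,1], and x_1 = 1: for all t ∈ N ∪ {0}, if x_{3t+1} = 1 and all previous iterates are positive, then x_{3t+2} > 0, x_{3t+3} > 0, and x_{3t+4} = 1. -/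
private lemma adam_core_aux (β₂ S B D : ℝ) (hb0 : 0 < β₂) (hb5 : β₂ ≤ 1/5)
    (h1b : 0 < 1 - β₂) (hS : S = 1 + β₂ + β₂^2)
    (hB : B = (2 - β₂ + β₂^2) / S) (hD : D = (1 + 2*β₂ - β₂^2) / S)
    (hBpos : 0 < B) (hDpos : 0 < D) :
    1 / Real.sqrt (1-β₂) ≤
      1 / (Real.sqrt 2 * Real.sqrt B) + 1 / (Real.sqrt 3 * Real.sqrt D) := by
  have hSpos : (0:ℝ) < S := by rw [hS]; positivity
  have hs1bpos : 0 < Real.sqrt (1-β₂) := Real.sqrt_pos.mpr h1b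
  have hP : (1/2 + β₂/12) ≤ Real.sqrt ((1-β₂) / (2*B)) := by
    apply (Real.le_sqrt (by linarith) (div_pos h1b (by linarith [hBpos])).le).mpr
    have hnum : (0:ℝ) < 2 - β₂ + β₂^2 := by nlinarith [sq_nonneg β₂]
    have hBval : (1-β₂)/(2*B) = (1-β₂)*S/(2*(2-β₂+β₂^2)) := by
      rw [hB]; field_simp
    rw [hBval, le_div_iff₀ (by linarith), hS]
    nlinarith [sq_nonneg β₂, pow_pos hb0 3, pow_pos hb0 2]
  have hQ : (1/2 - β₂/12) ≤ Real.sqrt ((1-β₂) / (3*D)) := by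
    apply (Real.le_sqrt (by linarith) (div_pos h1b (by linarith [hDpos])).le).mpr
    have hnum : (0:ℝ) < 1 + 2*β₂ - β₂^2 := by nlinarith [sq_nonneg β₂]
    have hDval : (1-β₂)/(3*D) = (1-β₂)*S/(3*(1+2*β₂-β₂^2)) := by
      rw [hD]; field_simp
    rw [hDval, le_div_iff₀ (by linarith), hS]
    nlinarith [sq_nonneg β₂, pow_pos hb0 3, pow_pos hb0 2, sq_nonneg (β₂*(1-β₂))]
  have hsBpos : 0 < Real.sqrt B := Real.sqrt_pos.mpr hBpos
  have hsDpos : 0 < Real.sqrt D := Real.sqrt_pos.mpr hDpos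
  have e1 : Real.sqrt ((1-β₂)/(2*B)) = Real.sqrt (1-β₂) / (Real.sqrt 2 * Real.sqrt B) := by
    rw [← Real.sqrt_mul (by norm_num : (0:ℝ) ≤ 2), ← Real.sqrt_div h1b.le]
  have e2 : Real.sqrt ((1-β₂)/(3*D)) = Real.sqrt (1-β₂) / (Real.sqrt 3 * Real.sqrt D) := by
    rw [← Real.sqrt_mul (by norm_num : (0:ℝ) ≤ 3), ← Real.sqrt_div h1b.le]
  rw [e1] at hP
  rw [e2] at hQ
  have hsum : 1 ≤ Real.sqrt (1-β₂) / (Real.sqrt 2 * Real.sqrt B)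
      + Real.sqrt (1-β₂) / (Real.sqrt 3 * Real.sqrt D) := by linarith
  rw [div_add_div _ _ (by positivity) (by positivity)] at hsum ⊢
  rw [div_le_div_iff₀ (by positivity) (by positivity)]
  rw [le_div_iff₀ (by positivity)] at hsum
  nlinarith [hsum, hs1bpos]

/-- Inductive step of the Adam non-convergence proof: if `x_{3t+1} = 1` and all previous
iterates are positive, then `x_{3t+2} > 0`, `x_{3t+3} > 0` and `x_{3t+4} = 1`. -/
theorem stmt_9 (C α β₂ : ℝ) (hC : 2 ≤ C) (hβ₂ : β₂ = 1 / (1 + C ^ 2))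
    (hα : 0 < α) (hα' : α < Real.sqrt (1 - β₂))
    (g : ℕ → ℝ) (hg : ∀ t, g t = if t % 3 = 1 then C else -1)
    (v : ℕ → ℝ) (hv0 : v 0 = 0)
    (hv : ∀ t : ℕ, 1 ≤ t → v t = β₂ * v (t - 1) + (1 - β₂) * g t ^ 2)
    (x : ℕ → ℝ) (hx1 : x 1 = 1)
    (hx : ∀ t : ℕ, 1 ≤ t →
      x (t + 1) = max (-1) (min 1 (x t - (α / Real.sqrt t) * g t / Real.sqrt (v t))))
    (t : ℕ) (hind1 : x (3 * t + 1) = 1)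
    (hind2 : ∀ s : ℕ, 1 ≤ s → s ≤ 3 * t + 1 → 0 < x s) :
    0 < x (3 * t + 2) ∧ 0 < x (3 * t + 3) ∧ x (3 * t + 4) = 1 := by
  have hC0 : (0:ℝ) < C := by linarith
  have hC4 : (4:ℝ) ≤ C ^ 2 := by nlinarith
  have h1C : (0:ℝ) < 1 + C ^ 2 := by nlinarith
  have hb0 : 0 < β₂ := by rw [hβ₂]; positivity
  have hb5 : β₂ ≤ 1 / 5 := by
    rw [hβ₂, div_le_div_iff₀ h1C (by norm_num)]; nlinarith
  have hbC : β₂ * (1 + C ^ 2) = 1 := by rw [hβ₂]; field_simp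
  have hC2b : β₂ * C ^ 2 = 1 - β₂ := by nlinarith
  have hb1 : β₂ < 1 := by nlinarith
  have h1b : (0:ℝ) < 1 - β₂ := by linarith
  have hαs : α < Real.sqrt (1 - β₂) := hα'
  -- v is nonnegative
  have hvnn : ∀ m, 0 ≤ v m := by
    intro m
    induction m with
    | zero => rw [hv0]
    | succ k ih =>
      rw [hv (k+1) (by omega)]
      simp only [Nat.add_sub_cancel]
      nlinarith [sq_nonneg (g (k+1)), mul_nonneg hb0.le ih]
  -- gradient values
  have hg1 : ∀ k, g (3*k+1) = C := by
    intro k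
    rw [hg, if_pos (by omega : (3*k+1) % 3 = 1)]
  have hg2 : ∀ k, g (3*k+2) = -1 := by
    intro k
    rw [hg, if_neg (by omega : ¬ (3*k+2) % 3 = 1)]
  have hg3 : ∀ k, g (3*k+3) = -1 := by
    intro k
    rw [hg, if_neg (by omega : ¬ (3*k+3) % 3 = 1)]
  -- v recursions
  have hv1 : ∀ k, v (3*k+1) = β₂ * v (3*k) + (1-β₂) * C^2 := by
    intro k
    rw [hv (3*k+1) (by omega)]
    simp only [Nat.add_sub_cancel]
    rw [hg1]
  have hv2 : ∀ k, v (3*k+2) = β₂ * v (3*k+1) + (1-β₂) := by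
    intro k
    have h := hv (3*k+2) (by omega)
    rw [hg2] at h
    simpa using h
  have hv3 : ∀ k, v (3*k+3) = β₂ * v (3*k+2) + (1-β₂) := by
    intro k
    have h := hv (3*k+3) (by omega)
    rw [hg3] at h
    simpa using h
  -- steady-state style upper bounds
  obtain ⟨S, hS⟩ : ∃ y : ℝ, y = 1 + β₂ + β₂^2 := ⟨_, rfl⟩
  have hSpos : 0 < S := by rw [hS]; positivity
  obtain ⟨A, hA⟩ : ∃ y : ℝ, y = (1 - β₂ + β₂^2 + β₂^3) / (β₂ * S) := ⟨_, rfl⟩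
  obtain ⟨B, hB⟩ : ∃ y : ℝ, y = (2 - β₂ + β₂^2) / S := ⟨_, rfl⟩
  obtain ⟨D, hD⟩ : ∃ y : ℝ, y = (1 + 2*β₂ - β₂^2) / S := ⟨_, rfl⟩
  have hBA : β₂ * A + (1 - β₂) = B := by
    rw [hA, hB, hS]; field_simp; ring
  have hDB : β₂ * B + (1 - β₂) = D := by
    rw [hD, hB, hS]; field_simp; ring
  have hAC : (1-β₂) * C^2 ≤ A := by
    rw [hA, hS, le_div_iff₀ (by positivity)]
    nlinarith [hC2b, sq_nonneg β₂, pow_pos hb0 3, sq_nonneg (β₂*C)]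
  have hfix : β₂^3 * A + (1-β₂)*(β₂^2+β₂) + (1-β₂)*C^2 = A := by
    have hC2 : C^2 = (1-β₂)/β₂ := by
      field_simp; linarith [hC2b]
    rw [hA, hS, hC2]; field_simp; ring
  have hvA : ∀ k, v (3*k+1) ≤ A := by
    intro k
    induction k with
    | zero =>
      have h := hv1 0
      simp only [Nat.mul_zero, Nat.zero_add, hv0, mul_zero, zero_add] at h
      rw [show 3*0+1 = 1 by norm_num, h]; exact hAC
    | succ k ih =>
      have e2 := hv2 k
      have e3 := hv3 k
      have e4 : v (3*(k+1)+1) = β₂ * v (3*k+3) + (1-β₂) * C^2 := by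
        have h := hv1 (k+1)
        rwa [show 3*(k+1) = 3*k+3 by ring] at h
      rw [e4, e3, e2]
      have key : β₂^3 * v (3*k+1) ≤ β₂^3 * A :=
        mul_le_mul_of_nonneg_left ih (by positivity)
      have expand : β₂ * (β₂ * (β₂ * v (3*k+1) + (1-β₂)) + (1-β₂)) + (1-β₂)*C^2
          = β₂^3 * v (3*k+1) + ((1-β₂)*(β₂^2+β₂) + (1-β₂)*C^2) := by ring
      rw [expand]
      linarith [key, hfix]
  -- bounds on the three relevant v's
  have hv1lb : (1-β₂) * C^2 ≤ v (3*t+1) := by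
    rw [hv1 t]; linarith [mul_nonneg hb0.le (hvnn (3*t))]
  have hv1pos : 0 < v (3*t+1) := lt_of_lt_of_le (by positivity) hv1lb
  have hv1ub : v (3*t+1) ≤ A := hvA t
  have hv2ub : v (3*t+2) ≤ B := by
    rw [hv2 t, ← hBA]
    linarith [mul_le_mul_of_nonneg_left hv1ub hb0.le]
  have hv3ub : v (3*t+3) ≤ D := by
    rw [hv3 t, ← hDB]
    linarith [mul_le_mul_of_nonneg_left hv2ub hb0.le]
  have hv2pos : 0 < v (3*t+2) := by
    rw [hv2 t]; linarith [mul_nonneg hb0.le (hvnn (3*t+1))]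
  have hv3pos : 0 < v (3*t+3) := by
    rw [hv3 t]; linarith [mul_nonneg hb0.le (hvnn (3*t+2))]
  have hBpos : 0 < B := lt_of_lt_of_le hv2pos hv2ub
  have hDpos : 0 < D := lt_of_lt_of_le hv3pos hv3ub
  -- notation for N
  obtain ⟨N, hN⟩ : ∃ y : ℝ, y = ((3*t+1 : ℕ) : ℝ) := ⟨_, rfl⟩
  have hN1 : (1:ℝ) ≤ N := by rw [hN]; exact_mod_cast (by omega : 1 ≤ 3*t+1)
  have hNpos : (0:ℝ) < N := by linarith
  have hsN1 : 1 ≤ Real.sqrt N := by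
    rw [show (1:ℝ) = Real.sqrt 1 by simp]; exact Real.sqrt_le_sqrt hN1
  have hsNpos : 0 < Real.sqrt N := by linarith
  have hcast2 : ((3*t+2 : ℕ) : ℝ) = N + 1 := by rw [hN]; push_cast; ring
  have hcast3 : ((3*t+3 : ℕ) : ℝ) = N + 2 := by rw [hN]; push_cast; ring
  -- step sizes
  obtain ⟨d₁, hd₁⟩ : ∃ y : ℝ, y = α / Real.sqrt N * C / Real.sqrt (v (3*t+1)) := ⟨_, rfl⟩
  obtain ⟨d₂, hd₂⟩ : ∃ y : ℝ, y = α / Real.sqrt (N+1) / Real.sqrt (v (3*t+2)) := ⟨_, rfl⟩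
  obtain ⟨d₃, hd₃⟩ : ∃ y : ℝ, y = α / Real.sqrt (N+2) / Real.sqrt (v (3*t+3)) := ⟨_, rfl⟩
  have hsv1pos : 0 < Real.sqrt (v (3*t+1)) := Real.sqrt_pos.mpr hv1pos
  have hsv2pos : 0 < Real.sqrt (v (3*t+2)) := Real.sqrt_pos.mpr hv2pos
  have hsv3pos : 0 < Real.sqrt (v (3*t+3)) := Real.sqrt_pos.mpr hv3pos
  have hd1pos : 0 < d₁ := by rw [hd₁]; positivity
  have hd2pos : 0 < d₂ := by rw [hd₂]; positivity
  have hd3pos : 0 < d₃ := by rw [hd₃]; positivity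
  -- lower bound on sqrt v1
  have hsv1lb : Real.sqrt (1-β₂) * C ≤ Real.sqrt (v (3*t+1)) := by
    have : Real.sqrt ((1-β₂) * C^2) = Real.sqrt (1-β₂) * C := by
      rw [Real.sqrt_mul h1b.le, Real.sqrt_sq hC0.le]
    rw [← this]; exact Real.sqrt_le_sqrt hv1lb
  have hs1bpos : 0 < Real.sqrt (1-β₂) := Real.sqrt_pos.mpr h1b
  -- d₁ < 1
  have hd1ub : d₁ ≤ α / (Real.sqrt N * Real.sqrt (1-β₂)) := by
    rw [hd₁]
    rw [div_mul_eq_mul_div, div_div]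
    rw [div_le_div_iff₀ (by positivity) (by positivity)]
    have h1 : Real.sqrt N * (Real.sqrt (1-β₂) * C) ≤ Real.sqrt N * Real.sqrt (v (3*t+1)) :=
      mul_le_mul_of_nonneg_left hsv1lb hsNpos.le
    calc α * C * (Real.sqrt N * Real.sqrt (1-β₂))
        = α * (Real.sqrt N * (Real.sqrt (1-β₂) * C)) := by ring
      _ ≤ α * (Real.sqrt N * Real.sqrt (v (3*t+1))) := by
          exact mul_le_mul_of_nonneg_left h1 hα.le
      _ = α * (Real.sqrt N * Real.sqrt (v (3*t+1))) := rfl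
  have hd1lt1 : d₁ < 1 := by
    have h2 : α / (Real.sqrt N * Real.sqrt (1-β₂)) ≤ α / Real.sqrt (1-β₂) := by
      apply div_le_div_of_nonneg_left hα.le hs1bpos
      exact le_mul_of_one_le_left hs1bpos.le hsN1
    have h3 : α / Real.sqrt (1-β₂) < 1 := (div_lt_one hs1bpos).mpr hαs
    linarith
  -- main inequality : d₁ ≤ d₂ + d₃
  have hmain : d₁ ≤ d₂ + d₃ := by
    -- lower bounds for d₂, d₃
    have hsB : Real.sqrt (v (3*t+2)) ≤ Real.sqrt B := Real.sqrt_le_sqrt hv2ub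
    have hsD : Real.sqrt (v (3*t+3)) ≤ Real.sqrt D := Real.sqrt_le_sqrt hv3ub
    have hsBpos : 0 < Real.sqrt B := Real.sqrt_pos.mpr hBpos
    have hsDpos : 0 < Real.sqrt D := Real.sqrt_pos.mpr hDpos
    have hsN2 : Real.sqrt (N+1) ≤ Real.sqrt 2 * Real.sqrt N := by
      rw [← Real.sqrt_mul (by norm_num)]
      exact Real.sqrt_le_sqrt (by linarith)
    have hsN3 : Real.sqrt (N+2) ≤ Real.sqrt 3 * Real.sqrt N := by
      rw [← Real.sqrt_mul (by norm_num)]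
      exact Real.sqrt_le_sqrt (by linarith)
    have hd2lb : α / (Real.sqrt 2 * Real.sqrt N * Real.sqrt B) ≤ d₂ := by
      rw [hd₂, div_div]
      apply div_le_div_of_nonneg_left hα.le (by positivity)
      calc Real.sqrt (N+1) * Real.sqrt (v (3*t+2))
          ≤ (Real.sqrt 2 * Real.sqrt N) * Real.sqrt B := by
            apply mul_le_mul hsN2 hsB (Real.sqrt_nonneg _) (by positivity)
        _ = Real.sqrt 2 * Real.sqrt N * Real.sqrt B := by ring
    have hd3lb : α / (Real.sqrt 3 * Real.sqrt N * Real.sqrt D) ≤ d₃ := by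
      rw [hd₃, div_div]
      apply div_le_div_of_nonneg_left hα.le (by positivity)
      calc Real.sqrt (N+2) * Real.sqrt (v (3*t+3))
          ≤ (Real.sqrt 3 * Real.sqrt N) * Real.sqrt D := by
            apply mul_le_mul hsN3 hsD (Real.sqrt_nonneg _) (by positivity)
        _ = Real.sqrt 3 * Real.sqrt N * Real.sqrt D := by ring
    -- core scalar inequality
    have hcore : 1 / Real.sqrt (1-β₂) ≤
        1 / (Real.sqrt 2 * Real.sqrt B) + 1 / (Real.sqrt 3 * Real.sqrt D) :=
      adam_core_aux β₂ S B D hb0 hb5 h1b hS hB hD hBpos hDpos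
    -- combine
    have hstep : α / (Real.sqrt N * Real.sqrt (1-β₂)) ≤
        α / (Real.sqrt 2 * Real.sqrt N * Real.sqrt B)
        + α / (Real.sqrt 3 * Real.sqrt N * Real.sqrt D) := by
      have hE : 0 ≤ α / Real.sqrt N := by positivity
      have heq1 : α / (Real.sqrt N * Real.sqrt (1-β₂))
          = (α / Real.sqrt N) * (1 / Real.sqrt (1-β₂)) := by
        ring
      have heq2 : α / (Real.sqrt 2 * Real.sqrt N * Real.sqrt B)
          = (α / Real.sqrt N) * (1 / (Real.sqrt 2 * Real.sqrt B)) := by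
        ring
      have heq3 : α / (Real.sqrt 3 * Real.sqrt N * Real.sqrt D)
          = (α / Real.sqrt N) * (1 / (Real.sqrt 3 * Real.sqrt D)) := by
        ring
      rw [heq1, heq2, heq3, ← mul_add]
      exact mul_le_mul_of_nonneg_left hcore hE
    linarith [hd1ub, hd2lb, hd3lb, hstep]
  -- now the x iterates
  have hx2 : x (3*t+2) = 1 - d₁ := by
    have h := hx (3*t+1) (by omega)
    rw [hind1, hg1 t, ← hN, ← hd₁] at h
    rw [show (3*t+2) = (3*t+1)+1 by ring, h]
    rw [min_eq_right (by linarith [hd1pos]), max_eq_right (by linarith [hd1lt1])]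
  have hx2pos : 0 < x (3*t+2) := by rw [hx2]; linarith
  have hx3 : x (3*t+3) = min 1 (1 - d₁ + d₂) := by
    have h := hx (3*t+2) (by omega)
    rw [hg2 t] at h
    rw [show (3*t+3) = (3*t+2)+1 by ring, h, hx2, hcast2]
    have harg : 1 - d₁ - α / Real.sqrt (N+1) * (-1) / Real.sqrt (v (3*t+2)) = 1 - d₁ + d₂ := by
      rw [hd₂]; ring
    rw [harg, max_eq_right]
    have : min 1 (1 - d₁ + d₂) ≥ min 1 0 := by
      apply min_le_min le_rfl; linarith
    have h0 : (0:ℝ) < min 1 (1 - d₁ + d₂) := lt_min (by norm_num) (by linarith)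
    linarith
  have hx3pos : 0 < x (3*t+3) := by
    rw [hx3]; exact lt_min (by norm_num) (by linarith)
  have hx4 : x (3*t+4) = 1 := by
    have h := hx (3*t+3) (by omega)
    rw [hg3 t] at h
    rw [show (3*t+4) = (3*t+3)+1 by ring, h, hcast3]
    have harg : x (3*t+3) - α / Real.sqrt (N+2) * (-1) / Real.sqrt (v (3*t+3))
        = x (3*t+3) + d₃ := by rw [hd₃]; ring
    rw [harg]
    have hge : 1 ≤ x (3*t+3) + d₃ := by
      rw [hx3]
      rcases le_or_gt 1 (1 - d₁ + d₂) with hcase | hcase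
      · rw [min_eq_left hcase]; linarith
      · rw [min_eq_right hcase.le]; linarith
    rw [min_eq_left hge, max_eq_right (by norm_num)]
  exact ⟨hx2pos, hx3pos, hx4⟩
end

section
/- Let 0 ≤ β_1 < 1, 0 < β_2 < 1, γ = β_1/√β_2 < 1, α > 0, and gradients g_{j,i} with |g_{j,i}| ≤ G_∞. Define m_t coordinate-wise by m_{t,i} = Σ_{j=1}^t (1-β_{1j}) Π_{k=1}^{t-j}β_{1(t-k+1)} g_{j,i} with β_{1j} ≤ β_1, and v_{t,i} = (1-β_2)Σ_{j=1}^t β_2^{t-j} g_{j,i}^2, and v̂_{t,i} = max_{s ≤ t} v_{s,i}. Then with α_t = α/√t, Σ_{t=1}^T α_t Σ_{i=1}^d m_{t,i}^2/√(v̂_{t,i}) ≤ (α √(1+log T)) / ((1-β_1)(1-γ)√(1-β_2)) · Σ_{i=1}^d ||g_{1:T,i}||_2. -/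
lemma geom_range_le {r : ℝ} (h0 : 0 ≤ r) (h1 : r < 1) (n : ℕ) :
    ∑ k ∈ Finset.range n, r ^ k ≤ 1 / (1 - r) := by
  have h : (0:ℝ) < 1 - r := by linarith
  have hp : 0 ≤ r ^ n := pow_nonneg h0 n
  calc ∑ k ∈ Finset.range n, r ^ k = (1 - r ^ n) / (1 - r) := by
        rw [geom_sum_eq (by linarith)]
        rw [div_eq_div_iff (by linarith) (by linarith)]; ring
    _ ≤ 1 / (1 - r) := by gcongr; linarith

lemma harm (T : ℕ) : ∑ j ∈ Finset.Icc 1 T, (1:ℝ)/j ≤ 1 + Real.log T := by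
  have h := harmonic_le_one_add_log T
  rw [harmonic_eq_sum_Icc] at h
  push_cast at h
  simpa [one_div] using h

lemma geom_Icc_le {r : ℝ} (h0 : 0 ≤ r) (h1 : r < 1) (a b : ℕ) :
    ∑ t ∈ Finset.Icc a b, r ^ (t - a) ≤ 1 / (1 - r) := by
  have : ∑ t ∈ Finset.Icc a b, r ^ (t - a) = ∑ k ∈ Finset.range (b + 1 - a), r ^ k := by
    apply Finset.sum_nbij' (fun t => t - a) (fun k => a + k) <;>
      (intros; simp_all [Finset.mem_Icc, Finset.mem_range]) <;> omega
  rw [this]; exact geom_range_le h0 h1 _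

lemma geom_Icc_le' {r : ℝ} (h0 : 0 ≤ r) (h1 : r < 1) (b : ℕ) :
    ∑ j ∈ Finset.Icc 1 b, r ^ (b - j) ≤ 1 / (1 - r) := by
  have : ∑ j ∈ Finset.Icc 1 b, r ^ (b - j) = ∑ k ∈ Finset.range b, r ^ k := by
    apply Finset.sum_nbij' (fun j => b - j) (fun k => b - k) <;>
      (intros; simp_all [Finset.mem_Icc, Finset.mem_range]) <;> omega
  rw [this]; exact geom_range_le h0 h1 _

lemma sum_Icc_comm (T : ℕ) (F : ℕ → ℕ → ℝ) :
    ∑ t ∈ Finset.Icc 1 T, ∑ j ∈ Finset.Icc 1 t, F t j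
      = ∑ j ∈ Finset.Icc 1 T, ∑ t ∈ Finset.Icc j T, F t j := by
  rw [Finset.sum_sigma', Finset.sum_sigma']
  apply Finset.sum_nbij' (fun p => ⟨p.2, p.1⟩) (fun p => ⟨p.2, p.1⟩) <;>
    (intros a ha; simp_all [Finset.mem_sigma, Finset.mem_Icc]) <;> omega

/-- Key lemma in the AMSGrad regret analysis:
`∑_{t=1}^T α_t ∑_i m_{t,i}²/√(v̂_{t,i})
  ≤ α√(1+log T)/((1-β₁)(1-γ)√(1-β₂)) ∑_i ‖g_{1:T,i}‖₂`,
where `α_t = α/√t`, `m` is the momentum with coefficients `β_{1j} ≤ β₁`, `v` the exponential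
moving average of squared gradients, and `v̂_{t,i} = max_{s ≤ t} v_{s,i}` (note `v_{0,i} = 0`). -/
theorem stmt_12 (β₁ β₂ α G : ℝ) (hβ₁ : 0 ≤ β₁) (hβ₁' : β₁ < 1) (hβ₂ : 0 < β₂) (hβ₂' : β₂ < 1)
    (γ : ℝ) (hγ : γ = β₁ / Real.sqrt β₂) (hγ' : γ < 1) (hα : 0 < α) (hG : 0 ≤ G)
    (d T : ℕ) (hT : 1 ≤ T) (g : ℕ → ℕ → ℝ) (hg : ∀ j i, |g j i| ≤ G)
    (β1t : ℕ → ℝ) (hβ1t : ∀ j, 0 ≤ β1t j) (hβ1t' : ∀ j, β1t j ≤ β₁)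
    (m v vhat : ℕ → ℕ → ℝ)
    (hm : ∀ t i, m t i = ∑ j ∈ Finset.Icc 1 t,
      (1 - β1t j) * (∏ k ∈ Finset.Icc 1 (t - j), β1t (t - k + 1)) * g j i)
    (hv : ∀ t i, v t i = (1 - β₂) * ∑ j ∈ Finset.Icc 1 t, β₂ ^ (t - j) * g j i ^ 2)
    (hvhat : ∀ t i, vhat t i =
      (Finset.Icc 0 t).sup' (Finset.nonempty_Icc.2 (Nat.zero_le t)) (fun s => v s i)) :
    ∑ t ∈ Finset.Icc 1 T, (α / Real.sqrt t) *
        ∑ i ∈ Finset.range d, m t i ^ 2 / Real.sqrt (vhat t i) ≤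
      α * Real.sqrt (1 + Real.log T) /
          ((1 - β₁) * (1 - γ) * Real.sqrt (1 - β₂)) *
        ∑ i ∈ Finset.range d, Real.sqrt (∑ j ∈ Finset.Icc 1 T, g j i ^ 2) := by
  have hβ₂1 : (0:ℝ) < 1 - β₂ := by linarith
  have hsβ₂ : 0 < Real.sqrt β₂ := Real.sqrt_pos.2 hβ₂
  have hγ0 : 0 ≤ γ := by rw [hγ]; positivity
  have h1β₁ : (0:ℝ) < 1 - β₁ := by linarith
  have h1γ : (0:ℝ) < 1 - γ := by linarith
  have hsq : 0 < Real.sqrt (1 - β₂) := Real.sqrt_pos.2 hβ₂1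
  set C : ℝ := 1 / ((1 - β₁) * Real.sqrt (1 - β₂)) with hC
  have hC0 : 0 ≤ C := by positivity
  have hvhat_ge : ∀ t i, v t i ≤ vhat t i := fun t i => by
    rw [hvhat]; exact Finset.le_sup' (fun s => v s i) (Finset.mem_Icc.2 ⟨Nat.zero_le t, le_refl t⟩)
  have hvhat0 : ∀ t i, 0 ≤ vhat t i := fun t i => by
    rw [hvhat]
    have h0 := Finset.le_sup' (fun s => v s i) (Finset.mem_Icc.2 ⟨Nat.zero_le 0, Nat.zero_le t⟩)
    have hz : v 0 i = 0 := by simp [hv]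
    rw [hz] at h0
    exact h0
  -- Step A: pointwise bound
  have hA : ∀ i, ∀ t ∈ Finset.Icc 1 T, m t i ^ 2 / Real.sqrt (vhat t i) ≤
      C * ∑ j ∈ Finset.Icc 1 t, γ ^ (t - j) * |g j i| := by
    intro i t _
    set w : ℕ → ℝ := fun j => (1 - β1t j) * ∏ k ∈ Finset.Icc 1 (t - j), β1t (t - k + 1) with hw
    have hw0 : ∀ j, 0 ≤ w j := fun j =>
      mul_nonneg (by linarith [hβ1t' j]) (Finset.prod_nonneg fun k _ => hβ1t _)
    have hwle : ∀ j, w j ≤ β₁ ^ (t - j) := by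
      intro j
      have h1 : ∏ k ∈ Finset.Icc 1 (t - j), β1t (t - k + 1) ≤ β₁ ^ (t - j) := by
        calc ∏ k ∈ Finset.Icc 1 (t - j), β1t (t - k + 1)
            ≤ ∏ _k ∈ Finset.Icc 1 (t - j), β₁ :=
              Finset.prod_le_prod (fun k _ => hβ1t _) (fun k _ => hβ1t' _)
          _ = β₁ ^ (t - j) := by rw [Finset.prod_const, Nat.card_Icc, Nat.add_sub_cancel]
      calc w j ≤ 1 * ∏ k ∈ Finset.Icc 1 (t - j), β1t (t - k + 1) :=
            mul_le_mul_of_nonneg_right (by linarith [hβ1t j])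
              (Finset.prod_nonneg fun k _ => hβ1t _)
        _ = _ := one_mul _
        _ ≤ β₁ ^ (t - j) := h1
    have hm2 : m t i ^ 2 ≤ (∑ j ∈ Finset.Icc 1 t, w j) *
        (∑ j ∈ Finset.Icc 1 t, w j * g j i ^ 2) := by
      have hrw : m t i = ∑ j ∈ Finset.Icc 1 t,
          Real.sqrt (w j) * (Real.sqrt (w j) * g j i) := by
        rw [hm]; refine Finset.sum_congr rfl fun j _ => ?_
        rw [← mul_assoc, Real.mul_self_sqrt (hw0 j)]
      rw [hrw]
      calc (∑ j ∈ Finset.Icc 1 t, Real.sqrt (w j) * (Real.sqrt (w j) * g j i)) ^ 2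
          ≤ (∑ j ∈ Finset.Icc 1 t, Real.sqrt (w j) ^ 2) *
            (∑ j ∈ Finset.Icc 1 t, (Real.sqrt (w j) * g j i) ^ 2) :=
            Finset.sum_mul_sq_le_sq_mul_sq _ _ _
        _ = _ := by
            congr 1
            · exact Finset.sum_congr rfl fun j _ => Real.sq_sqrt (hw0 j)
            · exact Finset.sum_congr rfl fun j _ => by
                rw [mul_pow, Real.sq_sqrt (hw0 j)]
    have hsum_w : ∑ j ∈ Finset.Icc 1 t, w j ≤ 1 / (1 - β₁) :=
      le_trans (Finset.sum_le_sum fun j _ => hwle j) (geom_Icc_le' hβ₁ hβ₁' t)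
    have hsum_wg : ∑ j ∈ Finset.Icc 1 t, w j * g j i ^ 2 ≤
        ∑ j ∈ Finset.Icc 1 t, β₁ ^ (t - j) * g j i ^ 2 :=
      Finset.sum_le_sum fun j _ => mul_le_mul_of_nonneg_right (hwle j) (sq_nonneg _)
    have hm2' : m t i ^ 2 ≤ (1 / (1 - β₁)) * ∑ j ∈ Finset.Icc 1 t, β₁ ^ (t - j) * g j i ^ 2 :=
      hm2.trans (mul_le_mul hsum_w hsum_wg
        (Finset.sum_nonneg fun j _ => mul_nonneg (hw0 j) (sq_nonneg _)) (by positivity))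
    rcases eq_or_lt_of_le (hvhat0 t i) with h0 | hpos
    · rw [← h0, Real.sqrt_zero, div_zero]
      exact mul_nonneg hC0 (Finset.sum_nonneg fun j _ =>
        mul_nonneg (pow_nonneg hγ0 _) (abs_nonneg _))
    · have hS : 0 < Real.sqrt (vhat t i) := Real.sqrt_pos.2 hpos
      have per : ∀ j ∈ Finset.Icc 1 t,
          β₁ ^ (t - j) * g j i ^ 2 / Real.sqrt (vhat t i) ≤
          γ ^ (t - j) * |g j i| / Real.sqrt (1 - β₂) := by
        intro j hj
        rcases eq_or_ne (g j i) 0 with hgz | hgz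
        · simp [hgz]
        · have ha : 0 < |g j i| := abs_pos.2 hgz
          have hvt : (1 - β₂) * (β₂ ^ (t - j) * g j i ^ 2) ≤ v t i := by
            rw [hv]
            exact mul_le_mul_of_nonneg_left
              (Finset.single_le_sum (f := fun k => β₂ ^ (t - k) * g k i ^ 2)
                (fun k _ => mul_nonneg (pow_nonneg hβ₂.le _) (sq_nonneg _)) hj)
              hβ₂1.le
          have hsqpow : Real.sqrt (β₂ ^ (t - j)) = Real.sqrt β₂ ^ (t - j) := by
            rw [show β₂ ^ (t - j) = (Real.sqrt β₂ ^ (t - j)) ^ 2 by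
              rw [← pow_mul, mul_comm, pow_mul, Real.sq_sqrt hβ₂.le]]
            exact Real.sqrt_sq (by positivity)
          have hD : Real.sqrt (1 - β₂) * (Real.sqrt β₂ ^ (t - j) * |g j i|) ≤
              Real.sqrt (vhat t i) := by
            have h2 := Real.sqrt_le_sqrt (hvt.trans (hvhat_ge t i))
            calc Real.sqrt (1 - β₂) * (Real.sqrt β₂ ^ (t - j) * |g j i|)
                = Real.sqrt ((1 - β₂) * (β₂ ^ (t - j) * g j i ^ 2)) := by
                  rw [Real.sqrt_mul hβ₂1.le, Real.sqrt_mul (pow_nonneg hβ₂.le _),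
                    Real.sqrt_sq_eq_abs, hsqpow]
              _ ≤ _ := h2
          have hDpos : 0 < Real.sqrt (1 - β₂) * (Real.sqrt β₂ ^ (t - j) * |g j i|) := by
            positivity
          calc β₁ ^ (t - j) * g j i ^ 2 / Real.sqrt (vhat t i)
              ≤ β₁ ^ (t - j) * g j i ^ 2 /
                (Real.sqrt (1 - β₂) * (Real.sqrt β₂ ^ (t - j) * |g j i|)) := by
                gcongr
            _ = γ ^ (t - j) * |g j i| / Real.sqrt (1 - β₂) := by
                rw [hγ, div_pow]
                field_simp
                rw [← sq_abs (g j i)]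
      calc m t i ^ 2 / Real.sqrt (vhat t i)
          ≤ ((1 / (1 - β₁)) * ∑ j ∈ Finset.Icc 1 t, β₁ ^ (t - j) * g j i ^ 2) /
            Real.sqrt (vhat t i) := (div_le_div_iff_of_pos_right hS).2 hm2'
        _ = (1 / (1 - β₁)) * ∑ j ∈ Finset.Icc 1 t,
            β₁ ^ (t - j) * g j i ^ 2 / Real.sqrt (vhat t i) := by
            rw [mul_div_assoc, Finset.sum_div]
        _ ≤ (1 / (1 - β₁)) * ∑ j ∈ Finset.Icc 1 t,
            γ ^ (t - j) * |g j i| / Real.sqrt (1 - β₂) :=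
            mul_le_mul_of_nonneg_left (Finset.sum_le_sum per) (by positivity)
        _ = C * ∑ j ∈ Finset.Icc 1 t, γ ^ (t - j) * |g j i| := by
            rw [← Finset.sum_div, hC]
            field_simp
  -- Steps B and C: per-coordinate bound
  have hBi : ∀ i, ∑ t ∈ Finset.Icc 1 T, (α / Real.sqrt t) * (m t i ^ 2 / Real.sqrt (vhat t i)) ≤
      α * Real.sqrt (1 + Real.log T) / ((1 - β₁) * (1 - γ) * Real.sqrt (1 - β₂)) *
        Real.sqrt (∑ j ∈ Finset.Icc 1 T, g j i ^ 2) := by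
    intro i
    set F : ℕ → ℝ := fun t => ∑ j ∈ Finset.Icc 1 t, γ ^ (t - j) * (|g j i| / Real.sqrt j) with hF
    have per_t : ∀ t ∈ Finset.Icc 1 T,
        (α / Real.sqrt t) * (m t i ^ 2 / Real.sqrt (vhat t i)) ≤ α * C * F t := by
      intro t ht
      have ht1 : (1:ℕ) ≤ t := (Finset.mem_Icc.1 ht).1
      have hst : 0 < Real.sqrt t := Real.sqrt_pos.2 (by exact_mod_cast ht1)
      calc (α / Real.sqrt t) * (m t i ^ 2 / Real.sqrt (vhat t i))
          ≤ (α / Real.sqrt t) * (C * ∑ j ∈ Finset.Icc 1 t, γ ^ (t - j) * |g j i|) :=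
            mul_le_mul_of_nonneg_left (hA i t ht) (by positivity)
        _ = α * C * ∑ j ∈ Finset.Icc 1 t, (γ ^ (t - j) * |g j i|) / Real.sqrt t := by
            rw [← Finset.sum_div]; ring
        _ ≤ α * C * F t := by
            apply mul_le_mul_of_nonneg_left ?_ (by positivity)
            apply Finset.sum_le_sum
            intro j hj
            have hj1 : 1 ≤ j := (Finset.mem_Icc.1 hj).1
            have hj2 : j ≤ t := (Finset.mem_Icc.1 hj).2
            have hsj : 0 < Real.sqrt j := Real.sqrt_pos.2 (by exact_mod_cast hj1)
            rw [mul_div_assoc]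
            apply mul_le_mul_of_nonneg_left ?_ (pow_nonneg hγ0 _)
            gcongr
    have hsum1 : ∑ t ∈ Finset.Icc 1 T, F t ≤
        (1 / (1 - γ)) * ∑ j ∈ Finset.Icc 1 T, |g j i| / Real.sqrt j := by
      rw [hF, sum_Icc_comm T (fun t j => γ ^ (t - j) * (|g j i| / Real.sqrt j)), Finset.mul_sum]
      apply Finset.sum_le_sum
      intro j hj
      rw [← Finset.sum_mul]
      exact mul_le_mul_of_nonneg_right (geom_Icc_le hγ0 hγ' j T) (by positivity)
    have hcs : ∑ j ∈ Finset.Icc 1 T, |g j i| / Real.sqrt j ≤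
        Real.sqrt (∑ j ∈ Finset.Icc 1 T, g j i ^ 2) * Real.sqrt (1 + Real.log T) := by
      have h1 : (∑ j ∈ Finset.Icc 1 T, |g j i| * (1 / Real.sqrt j)) ^ 2 ≤
          (∑ j ∈ Finset.Icc 1 T, |g j i| ^ 2) * ∑ j ∈ Finset.Icc 1 T, (1 / Real.sqrt j) ^ 2 :=
        Finset.sum_mul_sq_le_sq_mul_sq _ _ _
      have e1 : ∑ j ∈ Finset.Icc 1 T, |g j i| * (1 / Real.sqrt j) =
          ∑ j ∈ Finset.Icc 1 T, |g j i| / Real.sqrt j :=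
        Finset.sum_congr rfl fun j _ => by rw [mul_one_div]
      have e2 : ∑ j ∈ Finset.Icc 1 T, |g j i| ^ 2 = ∑ j ∈ Finset.Icc 1 T, g j i ^ 2 :=
        Finset.sum_congr rfl fun j _ => sq_abs _
      have e3 : ∑ j ∈ Finset.Icc 1 T, (1 / Real.sqrt j) ^ 2 = ∑ j ∈ Finset.Icc 1 T, (1:ℝ) / j :=
        Finset.sum_congr rfl fun j _ => by
          rw [div_pow, one_pow, Real.sq_sqrt (Nat.cast_nonneg j)]
      rw [e1, e2, e3] at h1
      have hX : 0 ≤ ∑ j ∈ Finset.Icc 1 T, |g j i| / Real.sqrt j :=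
        Finset.sum_nonneg fun j _ => by positivity
      have hg2 : 0 ≤ ∑ j ∈ Finset.Icc 1 T, g j i ^ 2 :=
        Finset.sum_nonneg fun j _ => sq_nonneg _
      have h2 : (∑ j ∈ Finset.Icc 1 T, |g j i| / Real.sqrt j) ^ 2 ≤
          (∑ j ∈ Finset.Icc 1 T, g j i ^ 2) * (1 + Real.log T) :=
        h1.trans (mul_le_mul_of_nonneg_left (harm T) hg2)
      calc ∑ j ∈ Finset.Icc 1 T, |g j i| / Real.sqrt j
          = Real.sqrt ((∑ j ∈ Finset.Icc 1 T, |g j i| / Real.sqrt j) ^ 2) :=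
            (Real.sqrt_sq hX).symm
        _ ≤ Real.sqrt ((∑ j ∈ Finset.Icc 1 T, g j i ^ 2) * (1 + Real.log T)) :=
            Real.sqrt_le_sqrt h2
        _ = _ := Real.sqrt_mul hg2 _
    calc ∑ t ∈ Finset.Icc 1 T, (α / Real.sqrt t) * (m t i ^ 2 / Real.sqrt (vhat t i))
        ≤ ∑ t ∈ Finset.Icc 1 T, α * C * F t := Finset.sum_le_sum per_t
      _ = α * C * ∑ t ∈ Finset.Icc 1 T, F t := (Finset.mul_sum _ _ _).symm
      _ ≤ α * C * ((1 / (1 - γ)) * ∑ j ∈ Finset.Icc 1 T, |g j i| / Real.sqrt j) :=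
          mul_le_mul_of_nonneg_left hsum1 (by positivity)
      _ ≤ α * C * ((1 / (1 - γ)) *
            (Real.sqrt (∑ j ∈ Finset.Icc 1 T, g j i ^ 2) * Real.sqrt (1 + Real.log T))) :=
          mul_le_mul_of_nonneg_left
            (mul_le_mul_of_nonneg_left hcs (by positivity)) (by positivity)
      _ = α * Real.sqrt (1 + Real.log T) / ((1 - β₁) * (1 - γ) * Real.sqrt (1 - β₂)) *
          Real.sqrt (∑ j ∈ Finset.Icc 1 T, g j i ^ 2) := by
          rw [hC]; field_simp
  -- assemble over coordinates
  calc ∑ t ∈ Finset.Icc 1 T, (α / Real.sqrt t) *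
        ∑ i ∈ Finset.range d, m t i ^ 2 / Real.sqrt (vhat t i)
      = ∑ i ∈ Finset.range d, ∑ t ∈ Finset.Icc 1 T,
          (α / Real.sqrt t) * (m t i ^ 2 / Real.sqrt (vhat t i)) := by
        simp_rw [Finset.mul_sum]
        exact Finset.sum_comm
    _ ≤ ∑ i ∈ Finset.range d,
          α * Real.sqrt (1 + Real.log T) / ((1 - β₁) * (1 - γ) * Real.sqrt (1 - β₂)) *
            Real.sqrt (∑ j ∈ Finset.Icc 1 T, g j i ^ 2) :=
        Finset.sum_le_sum fun i _ => hBi i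
    _ = _ := (Finset.mul_sum _ _ _).symm
end

section
/- Let 0 ≤ β_1 < 1 and reals g_{j,i} for j ∈ [T], i ∈ [d]. Then Σ_{t=1}^T Σ_{i=1}^d Σ_{j=1}^t β_1^{t-j} g_{j,i}^2 / sqrt(Σ_{k=1}^j g_{k,i}^2) ≤ (1/(1-β_1)) Σ_{i=1}^d Σ_{j=1}^T g_{j,i}^2/sqrt(Σ_{k=1}^j g_{k,i}^2) ≤ (2/(1-β_1)) Σ_{i=1}^d ||g_{1:T,i}||_2. -/
/-!
Swapping the order of summation, each term `a_j := g_{j,i}² / √(∑_{k≤j} g_{k,i}²)` is weighted by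
`∑_{t=j}^{T} β₁^{t-j} ≤ 1/(1-β₁)`. For the second inequality, `y / √S ≤ 2 (√S - √(S - y))`
whenever `0 ≤ y ≤ S`, so `∑_j y_j / √(∑_{k≤j} y_k)` telescopes to at most `2 √(∑_j y_j)`.
-/

open Finset

lemma div_sqrt_le_two_mul_sub_sqrt {a b : ℝ} (hb : 0 ≤ b) (hab : b ≤ a) :
    b / √a ≤ 2 * (√a - √(a - b)) := by
  rcases (hb.trans hab).eq_or_lt with ha | ha
  · obtain rfl : b = 0 := by linarith
    simp
  have hmono : √(a - b) ≤ √a := Real.sqrt_le_sqrt (by linarith)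
  rw [div_le_iff₀ (Real.sqrt_pos.mpr ha)]
  calc b = (√a - √(a - b)) * (√a + √(a - b)) := by
          linear_combination Real.sq_sqrt (sub_nonneg.mpr hab) - Real.sq_sqrt ha.le
    _ ≤ (√a - √(a - b)) * (√a + √a) := by gcongr
    _ = 2 * (√a - √(a - b)) * √a := by ring

lemma sum_div_sqrt_partial_sum_le (T : ℕ) {y : ℕ → ℝ} (hy : ∀ j, 0 ≤ y j) :
    ∑ j ∈ Icc 1 T, y j / √(∑ k ∈ Icc 1 j, y k) ≤ 2 * √(∑ j ∈ Icc 1 T, y j) := by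
  induction T with
  | zero => simp
  | succ n ih =>
    have hS : ∑ k ∈ Icc 1 (n + 1), y k = ∑ k ∈ Icc 1 n, y k + y (n + 1) :=
      sum_Icc_succ_top (by omega) y
    have hstep : y (n + 1) / √(∑ k ∈ Icc 1 (n + 1), y k) ≤
        2 * (√(∑ k ∈ Icc 1 (n + 1), y k) - √(∑ k ∈ Icc 1 n, y k)) := by
      have := div_sqrt_le_two_mul_sub_sqrt (hy (n + 1))
        (le_add_of_nonneg_left (sum_nonneg fun k (_ : k ∈ Icc 1 n) => hy k))
      rwa [add_sub_cancel_right, ← hS] at this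
    rw [sum_Icc_succ_top (by omega)]
    linarith

lemma sum_Icc_pow_sub_le {β : ℝ} (hβ : 0 ≤ β) (hβ' : β < 1) (j T : ℕ) :
    ∑ t ∈ Icc j T, β ^ (t - j) ≤ 1 / (1 - β) := by
  rw [← Ico_add_one_right_eq_Icc, sum_Ico_eq_sum_range]
  simp only [Nat.add_sub_cancel_left]
  simpa [← range_eq_Ico] using geom_sum_Ico_le_of_lt_one hβ hβ' (m := 0) (n := T + 1 - j)

lemma sum_Icc_discounted_le {β : ℝ} (hβ : 0 ≤ β) (hβ' : β < 1) (T : ℕ) {a : ℕ → ℝ}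
    (ha : ∀ j, 0 ≤ a j) :
    ∑ t ∈ Icc 1 T, ∑ j ∈ Icc 1 t, β ^ (t - j) * a j ≤ 1 / (1 - β) * ∑ j ∈ Icc 1 T, a j := by
  have hswap : ∑ t ∈ Icc 1 T, ∑ j ∈ Icc 1 t, β ^ (t - j) * a j =
      ∑ j ∈ Icc 1 T, (∑ t ∈ Icc j T, β ^ (t - j)) * a j := by
    simp_rw [sum_mul]
    exact sum_comm' fun t j => by simp only [mem_Icc]; omega
  rw [hswap, mul_sum]
  exact sum_le_sum fun j _ =>
    mul_le_mul_of_nonneg_right (sum_Icc_pow_sub_le hβ hβ' j T) (ha j)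

/-- Exchanging sums over geometric weights and applying the Adagrad-style bound
`∑_j y_j/√(∑_{k≤j} y_k) ≤ 2√(∑ y_j)` coordinate-wise. -/
theorem stmt_15 (β₁ : ℝ) (hβ₁ : 0 ≤ β₁) (hβ₁' : β₁ < 1) (T d : ℕ) (g : ℕ → ℕ → ℝ) :
    (∑ t ∈ Finset.Icc 1 T, ∑ i ∈ Finset.range d, ∑ j ∈ Finset.Icc 1 t,
        β₁ ^ (t - j) * g j i ^ 2 / Real.sqrt (∑ k ∈ Finset.Icc 1 j, g k i ^ 2) ≤
      (1 / (1 - β₁)) * ∑ i ∈ Finset.range d, ∑ j ∈ Finset.Icc 1 T,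
        g j i ^ 2 / Real.sqrt (∑ k ∈ Finset.Icc 1 j, g k i ^ 2)) ∧
    (1 / (1 - β₁)) * ∑ i ∈ Finset.range d, ∑ j ∈ Finset.Icc 1 T,
        g j i ^ 2 / Real.sqrt (∑ k ∈ Finset.Icc 1 j, g k i ^ 2) ≤
      (2 / (1 - β₁)) * ∑ i ∈ Finset.range d,
        Real.sqrt (∑ j ∈ Finset.Icc 1 T, g j i ^ 2) := by
  constructor
  · rw [sum_comm, mul_sum]
    refine sum_le_sum fun i _ => ?_
    simp_rw [mul_div_assoc]
    exact sum_Icc_discounted_le hβ₁ hβ₁' T fun j => by positivity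
  · have hscale : 0 ≤ 1 / (1 - β₁) := one_div_nonneg.mpr (by linarith)
    rw [div_eq_mul_one_div 2, mul_comm 2, mul_assoc]
    refine mul_le_mul_of_nonneg_left ?_ hscale
    rw [mul_sum]
    exact sum_le_sum fun i _ => sum_div_sqrt_partial_sum_le T fun j => sq_nonneg (g j i)
end
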